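/- arXiv:2109.03198 — 9 statements merged into one kernel-verified Lean document; each statement's English description precedes it below -/
import Mathlib

section
/- Let G be a directed graph on {1,…,n} with parameters ε, δ, θ in the legal range. If σ ∈ FP(G,ε,δ) and σ ⊆ τ ⊆ {1,…,n}, then σ ∈ FP(G|_τ, ε, δ); that is, a fixed point support of the full CTLN is also a fixed point support of the CTLN of any induced subgraph containing it. In particular, σ ∈ FP(G,ε,δ) implies σ ∈ FP(G|_σ, ε, δ). -/
open scoped Classical

noncomputable section

/-- The parameters ε, δ, θ are in the legal range. -/
def legalRange (ε δ θ : ℝ) : Prop :=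
  0 < δ ∧ 0 < θ ∧ 0 < ε ∧ ε < δ / (δ + 1)

/-- The CTLN matrix of a directed graph `E` (where `E j i` means there is an edge j → i):
`W i i = 0`, `W i j = -1 + ε` if `j → i`, and `W i j = -1 - δ` otherwise. -/
def ctlnW {V : Type*} (E : V → V → Prop) (ε δ : ℝ) : Matrix V V ℝ :=
  fun i j => if i = j then 0 else if E j i then -1 + ε else -1 - δ

/-- A fixed point of the CTLN: a nonnegative vector with
`x i = max 0 (∑ j, W i j * x j + θ)` for all `i`. -/
def isFixedPoint {V : Type*} [Fintype V] (W : Matrix V V ℝ) (θ : ℝ) (x : V → ℝ) : Prop :=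
  (∀ i, 0 ≤ x i) ∧ ∀ i, x i = max 0 ((∑ j, W i j * x j) + θ)

/-- The support of a vector: the set of indices where it is positive. -/
def support {V : Type*} (x : V → ℝ) : Set V := {i | 0 < x i}

/-- The set of fixed point supports of the CTLN associated to the graph `E`. -/
def FP {V : Type*} [Fintype V] (E : V → V → Prop) (ε δ θ : ℝ) : Set (Set V) :=
  {σ | ∃ x : V → ℝ, isFixedPoint (ctlnW E ε δ) θ x ∧ support x = σ}

/-- The induced subgraph of `E` on the vertex subset `τ`. -/
def restrict {V : Type*} (E : V → V → Prop) (τ : Set V) : ↥τ → ↥τ → Prop :=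
  fun i j => E (i : V) (j : V)

/-- The principal submatrix `W_σ` with rows and columns restricted to `σ`. -/
def subMatrix {V : Type*} (W : Matrix V V ℝ) (σ : Set V) : Matrix ↥σ ↥σ ℝ :=
  fun i j => W (i : V) (j : V)

end

/-! Vertices outside `τ` carry zero activity at a fixed point supported in `τ`, so deleting them
changes none of the sums `∑ j, W i j * x j`: the fixed point equations at the vertices of `τ` are
those of the principal submatrix `W_τ`, which is the CTLN matrix of the induced subgraph `G|_τ`. -/

theorem ctlnW_restrict {V : Type*} (E : V → V → Prop) (ε δ : ℝ) (τ : Set V) :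
    ctlnW (restrict E τ) ε δ = subMatrix (ctlnW E ε δ) τ := by
  ext i j
  simp only [ctlnW, restrict, subMatrix, Subtype.ext_iff]
  congr -- the two sides differ only in their `Decidable` instances

theorem isFixedPoint_subMatrix {V : Type*} [Fintype V] {W : Matrix V V ℝ} {θ : ℝ} {x : V → ℝ}
    (hx : isFixedPoint W θ x) {τ : Set V} (hτ : support x ⊆ τ) :
    isFixedPoint (subMatrix W τ) θ (fun i : τ => x i) := by
  obtain ⟨hnonneg, hfix⟩ := hx
  have hvanish : ∀ j, j ∉ τ → x j = 0 := fun j hj =>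
    le_antisymm (not_lt.mp fun hpos => hj (hτ hpos)) (hnonneg j)
  refine ⟨fun i => hnonneg i, fun i => ?_⟩
  have hsum : ∑ j : τ, subMatrix W τ i j * x j = ∑ j, W i j * x j :=
    (Finset.sum_congr_set τ _ _ (fun _ _ => rfl) fun j hj => by rw [hvanish j hj, mul_zero]).symm
  rw [hsum]
  exact hfix i

theorem restrict_mem_FP {V : Type*} [Fintype V] {E : V → V → Prop} {ε δ θ : ℝ} {σ τ : Set V}
    (hσ : σ ∈ FP E ε δ θ) (hστ : σ ⊆ τ) :
    {i : τ | (i : V) ∈ σ} ∈ FP (restrict E τ) ε δ θ := by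
  obtain ⟨x, hx, rfl⟩ := hσ
  refine ⟨fun i => x i, ?_, rfl⟩
  rw [ctlnW_restrict]
  exact isFixedPoint_subMatrix hx hστ

theorem statement_3_general {n : ℕ} (E : Fin n → Fin n → Prop)
    (ε δ θ : ℝ)
    (σ τ : Set (Fin n)) (hσ : σ ∈ FP E ε δ θ) (hστ : σ ⊆ τ) :
    {i : ↥τ | (i : Fin n) ∈ σ} ∈ FP (restrict E τ) ε δ θ ∧
    Set.univ ∈ FP (restrict E σ) ε δ θ := by
  refine ⟨restrict_mem_FP hσ hστ, ?_⟩
  have hself : {i : σ | (i : Fin n) ∈ σ} = Set.univ := Set.eq_univ_of_forall Subtype.prop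
  simpa only [hself] using restrict_mem_FP hσ subset_rfl

/-- A fixed point support of the full CTLN is also a fixed point support of the
CTLN of any induced subgraph containing it; in particular of the induced subgraph on itself. -/
theorem statement_3 {n : ℕ} (E : Fin n → Fin n → Prop)
    (h_irrefl : ∀ i, ¬ E i i)
    (ε δ θ : ℝ) (hpar : legalRange ε δ θ)
    (σ τ : Set (Fin n)) (hσ : σ ∈ FP E ε δ θ) (hστ : σ ⊆ τ) :
    {i : ↥τ | (i : Fin n) ∈ σ} ∈ FP (restrict E τ) ε δ θ ∧
    Set.univ ∈ FP (restrict E σ) ε δ θ :=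
  statement_3_general E ε δ θ σ τ hσ hστ
end

section
/- (Sinks rule) Let G be a directed graph on {1,…,n} with parameters ε, δ, θ in the legal range. For a singleton σ = {i}, σ ∈ FP(G,ε,δ) if and only if i is a sink of G (i.e., i has no outgoing edges); in that case the corresponding fixed point is the vector with x_i = θ and x_j = 0 for j ≠ i. -/
open scoped Classical

lemma sum_single_support {n : ℕ} (W : Matrix (Fin n) (Fin n) ℝ) (x : Fin n → ℝ) (i : Fin n)
    (h : ∀ k, k ≠ i → x k = 0) (k : Fin n) : (∑ j, W k j * x j) = W k i * x i := by
  refine Finset.sum_eq_single i (fun b _ hb => by rw [h b hb, mul_zero]) (by simp)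

/-- Sinks rule: a singleton {i} is a fixed point support iff i is a sink of G;
in that case the corresponding fixed point is the vector with x_i = θ and all other
entries zero. -/
theorem statement_4 {n : ℕ} (E : Fin n → Fin n → Prop)
    (h_irrefl : ∀ i, ¬ E i i)
    (ε δ θ : ℝ) (hpar : legalRange ε δ θ) (i : Fin n) :
    (({i} : Set (Fin n)) ∈ FP E ε δ θ ↔ ∀ j, ¬ E i j) ∧
    ((∀ j, ¬ E i j) →
      (isFixedPoint (ctlnW E ε δ) θ (fun j => if j = i then θ else 0) ∧
        support (fun j : Fin n => if j = i then θ else 0) = {i}) ∧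
      ∀ x : Fin n → ℝ, isFixedPoint (ctlnW E ε δ) θ x → support x = {i} →
        x = fun j => if j = i then θ else 0) := by
  obtain ⟨hδ, hθ, hε, hεδ⟩ := hpar
  -- forward analysis for any fixed point with support {i}
  have key : ∀ x : Fin n → ℝ, isFixedPoint (ctlnW E ε δ) θ x → support x = {i} →
      x = fun j => if j = i then θ else 0 := by
    intro x ⟨hx0, hxeq⟩ hsupp
    have hoff : ∀ k, k ≠ i → x k = 0 := by
      intro k hk
      have hns : k ∉ support x := by rw [hsupp]; simpa using hk
      have : ¬ 0 < x k := hns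
      linarith [hx0 k, not_lt.1 this]
    have hxi : x i = θ := by
      have := hxeq i
      rw [sum_single_support _ x i hoff i] at this
      simp [ctlnW] at this
      rw [this, max_eq_right hθ.le]
    funext j
    by_cases hj : j = i
    · simp [hj, hxi]
    · simp [hj, hoff j hj]
  have sink_fp : (∀ j, ¬ E i j) →
      isFixedPoint (ctlnW E ε δ) θ (fun j => if j = i then θ else 0) := by
    intro hsink
    constructor
    · intro k; dsimp only; split <;> [exact hθ.le; exact le_rfl]
    · intro k
      have hsum : (∑ j, ctlnW E ε δ k j * (if j = i then θ else 0))
          = ctlnW E ε δ k i * θ := by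
        rw [sum_single_support _ _ i (fun m hm => by simp [hm]) k]
        simp
      dsimp only
      rw [hsum]
      by_cases hk : k = i
      · subst hk
        simp [ctlnW, max_eq_right hθ.le]
      · have : ctlnW E ε δ k i = -1 - δ := by
          simp [ctlnW, hk, hsink k]
        rw [this, if_neg hk, eq_comm, max_eq_left]
        nlinarith
  have hsupp_ind : support (fun j : Fin n => if j = i then θ else 0) = {i} := by
    ext j
    by_cases hj : j = i <;> simp [support, hj, hθ]
  refine ⟨⟨?_, ?_⟩, fun hsink => ⟨⟨sink_fp hsink, hsupp_ind⟩, key⟩⟩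
  · rintro ⟨x, hfp, hsupp⟩ j hEij
    have hji : j ≠ i := fun h => h_irrefl i (h ▸ hEij)
    have hxval := key x hfp hsupp
    obtain ⟨hx0, hxeq⟩ := hfp
    have := hxeq j
    rw [sum_single_support _ x i (fun k hk => by rw [hxval]; simp [hk]) j] at this
    have hxi : x i = θ := by rw [hxval]; simp
    have hxj : x j = 0 := by rw [hxval]; simp [hji]
    rw [hxi, hxj] at this
    have hw : ctlnW E ε δ j i = -1 + ε := by simp [ctlnW, hji, hEij]
    rw [hw] at this
    have hpos : 0 < (-1 + ε) * θ + θ := by nlinarith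
    rw [max_eq_right hpos.le] at this
    linarith
  · intro hsink
    exact ⟨_, sink_fp hsink, hsupp_ind⟩
end

section
/- (Sources rule) Let G be a directed graph on {1,…,n} with parameters ε, δ, θ in the legal range, and let σ ⊆ {1,…,n}. If some i ∈ σ is a proper source in the induced subgraph G|_σ (i.e., i has no incoming edges from σ but at least one outgoing edge to σ) or is a proper source in G, then σ ∉ FP(G,ε,δ). -/
open scoped Classical

/-- Sources rule: if some i ∈ σ is a proper source in the induced subgraph
G|_σ or in G, then σ is not a fixed point support. -/
theorem statement_5 {n : ℕ} (E : Fin n → Fin n → Prop)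
    (h_irrefl : ∀ i, ¬ E i i)
    (ε δ θ : ℝ) (hpar : legalRange ε δ θ)
    (σ : Set (Fin n)) (i : Fin n) (hi : i ∈ σ)
    (hsource : ((∀ j ∈ σ, ¬ E j i) ∧ (∃ j ∈ σ, E i j)) ∨
               ((∀ j, ¬ E j i) ∧ (∃ j, E i j))) :
    σ ∉ FP E ε δ θ := by
  obtain ⟨hδ, hθ, hε, -⟩ := hpar
  obtain ⟨hno, k, hik⟩ : (∀ j ∈ σ, ¬ E j i) ∧ ∃ k, E i k := by
    rcases hsource with ⟨h1, j, _, h2⟩ | ⟨h1, h2⟩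
    · exact ⟨h1, j, h2⟩
    · exact ⟨fun j _ => h1 j, h2⟩
  rintro ⟨x, ⟨hx0, hxfix⟩, hsupp⟩
  have hxi : 0 < x i := by rw [← hsupp] at hi; exact hi
  have hki : k ≠ i := fun h => h_irrefl i (h ▸ hik)
  have hmem : ∀ j, 0 < x j → j ∈ σ := fun j hj => hsupp ▸ hj
  set W := ctlnW E ε δ with hW
  have hWi : ∀ j, 0 < x j → j ≠ i → W i j = -1 - δ := by
    intro j hj hji
    simp only [hW, ctlnW]
    rw [if_neg (Ne.symm hji), if_neg (hno j (hmem j hj))]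
  have hA : x i = (∑ j, W i j * x j) + θ := by
    have h := hxfix i
    by_cases hc : 0 ≤ (∑ j, W i j * x j) + θ
    · rw [h, max_eq_right hc]
    · rw [h, max_eq_left (le_of_lt (lt_of_not_ge hc))] at hxi
      exact absurd hxi (lt_irrefl 0)
  have hB : (∑ j, W k j * x j) + θ ≤ x k := by
    rw [hxfix k]; exact le_max_right _ _
  have hdiff : (-1 + ε) * x i + (1 + δ) * x k ≤
      (∑ j, W k j * x j) - (∑ j, W i j * x j) := by
    rw [← Finset.sum_sub_distrib]
    have hterm : ∀ j ∈ Finset.univ,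
        (if j = i then (-1 + ε) * x i else 0) + (if j = k then (1 + δ) * x k else 0)
          ≤ W k j * x j - W i j * x j := by
      intro j _
      by_cases hji : j = i
      · subst hji
        rw [if_pos rfl, if_neg (Ne.symm hki)]
        have h1 : W k j = -1 + ε := by
          simp only [hW, ctlnW]; rw [if_neg hki, if_pos hik]
        have h2 : W j j = (0 : ℝ) := by simp [hW, ctlnW]
        rw [h1, h2]; linarith
      · by_cases hjk : j = k
        · subst hjk
          rw [if_neg hji, if_pos rfl]
          have h1 : W j j = (0 : ℝ) := by simp [hW, ctlnW]
          rcases eq_or_lt_of_le (hx0 j) with h | h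
          · rw [← h]; simp
          · have h2 : W i j = -1 - δ := hWi j h hji
            rw [h1, h2]; nlinarith
        · rw [if_neg hji, if_neg hjk]
          rcases eq_or_lt_of_le (hx0 j) with h | h
          · rw [← h]; simp
          · have h2 : W i j = -1 - δ := hWi j h hji
            have h3 : -1 - δ ≤ W k j := by
              simp only [hW, ctlnW]
              split_ifs <;> linarith
            have h4 := mul_le_mul_of_nonneg_right h3 (hx0 j)
            rw [h2]; linarith
    have := Finset.sum_le_sum hterm
    rw [Finset.sum_add_distrib, Finset.sum_ite_eq' Finset.univ i (fun _ => (-1 + ε) * x i),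
      Finset.sum_ite_eq' Finset.univ k (fun _ => (1 + δ) * x k)] at this
    simpa using this
  nlinarith [mul_pos hε hxi, mul_nonneg hδ.le (hx0 k)]
end

section
/- Let G be a directed graph on {1,…,n} with parameters ε, δ, θ in the legal range, and let σ ⊆ {1,…,n} be such that the induced subgraph G|_σ is a directed cycle on the vertices of σ. Then σ ∈ FP(G,ε,δ) if and only if no vertex k ∉ σ receives two or more edges from vertices of σ. -/
open scoped Classical

/-- Auxiliary: restrict a sum against a vector vanishing off the range of an injection. -/
lemma sum_restrict_aux {n m : ℕ} (v : Fin m → Fin n) (hv : Function.Injective v)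
    (x : Fin n → ℝ) (hx : ∀ j, j ∉ Set.range v → x j = 0) (f : Fin n → ℝ) :
    ∑ j, f j * x j = ∑ b, f (v b) * x (v b) := by
  have h1 : ∑ j ∈ Finset.univ.image v, f j * x j = ∑ b, f (v b) * x (v b) :=
    Finset.sum_image (fun a _ b _ h => hv h)
  rw [← h1]
  refine (Finset.sum_subset (Finset.subset_univ _) ?_).symm
  intro j _ hj
  rw [hx j, mul_zero]
  intro ⟨b, hb⟩
  exact hj (Finset.mem_image.mpr ⟨b, Finset.mem_univ _, hb⟩)

/-- if G|_σ is a directed cycle, then σ ∈ FP(G) iff no vertex outside σ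
receives two or more edges from σ. -/
theorem statement_7 {n : ℕ} (E : Fin n → Fin n → Prop)
    (h_irrefl : ∀ i, ¬ E i i)
    (ε δ θ : ℝ) (hpar : legalRange ε δ θ)
    (σ : Set (Fin n))
    (hcycle : ∃ m : ℕ, 2 ≤ m ∧ ∃ v : Fin m → Fin n, Function.Injective v ∧
      Set.range v = σ ∧
      ∀ a b : Fin m, (E (v a) (v b) ↔ (b : ℕ) = ((a : ℕ) + 1) % m)) :
    σ ∈ FP E ε δ θ ↔ ∀ k ∉ σ, ¬ (2 ≤ {j | j ∈ σ ∧ E j k}.ncard) := by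
  obtain ⟨hδ, hθ, hε, hεlt⟩ := hpar
  obtain ⟨m, hm2, v, hvinj, hvrange, hEiff⟩ := hcycle
  haveI : NeZero m := ⟨by omega⟩
  haveI : Nonempty (Fin m) := ⟨⟨0, by omega⟩⟩
  have h1 : ((1 : Fin m) : ℕ) = 1 := by
    rw [Fin.val_one']; exact Nat.mod_eq_of_lt (by omega)
  have hEdge : ∀ a b : Fin m, E (v b) (v a) ↔ a = b + 1 := by
    intro a b
    rw [hEiff b a]
    have hb : ((b + 1 : Fin m) : ℕ) = ((b : ℕ) + 1) % m := by rw [Fin.val_add, h1]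
    rw [Fin.ext_iff, hb]
  have hsucc_ne : ∀ a : Fin m, a + 1 ≠ a := by
    intro a h
    have h2 : (1 : Fin m) = 0 := by
      have : a + 1 = a + 0 := by simpa using h
      exact add_left_cancel this
    have h3 := congrArg Fin.val h2
    rw [h1, Fin.val_zero] at h3
    omega
  have hε1 : ε < 1 := by
    have hlt : δ / (δ + 1) < 1 := by rw [div_lt_one (by linarith)]; linarith
    linarith
  have hmR : (2 : ℝ) ≤ (m : ℝ) := by exact_mod_cast hm2
  have hD : 0 < (1 + δ) * (m : ℝ) - 2 * δ - ε := by nlinarith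
  -- decomposition of the CTLN matrix on σ × σ
  have hW : ∀ a b : Fin m, ctlnW E ε δ (v a) (v b)
      = -(1 + δ) + (if b = a then 1 + δ else 0) + (if b = a - 1 then δ + ε else 0) := by
    intro a b
    unfold ctlnW
    by_cases hba : b = a
    · subst hba
      rw [if_pos rfl, if_pos rfl, if_neg (fun h => hsucc_ne b (eq_sub_iff_add_eq.mp h))]
      ring
    · rw [if_neg (fun h => hba (hvinj h).symm)]
      by_cases hpre : b = a - 1
      · rw [if_pos ((hEdge a b).mpr (eq_sub_iff_add_eq.mp hpre).symm), if_neg hba, if_pos hpre]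
        ring
      · rw [if_neg (fun hEb => hpre (eq_sub_iff_add_eq.mpr ((hEdge a b).mp hEb).symm)),
          if_neg hba, if_neg hpre]
        ring
  -- row sums for rows in σ
  have hrow : ∀ (x : Fin n → ℝ), (∀ j, j ∉ σ → x j = 0) → ∀ a : Fin m,
      ∑ j, ctlnW E ε δ (v a) j * x j
        = -(1 + δ) * (∑ b, x (v b)) + (1 + δ) * x (v a) + (δ + ε) * x (v (a - 1)) := by
    intro x hx a
    rw [sum_restrict_aux v hvinj x (by rw [hvrange]; exact hx) _]
    have hpt : ∀ b : Fin m, ctlnW E ε δ (v a) (v b) * x (v b)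
        = -(1 + δ) * x (v b) + ((if b = a then (1 + δ) * x (v b) else 0)
          + (if b = a - 1 then (δ + ε) * x (v b) else 0)) := by
      intro b; rw [hW a b]
      split_ifs <;> ring
    rw [Finset.sum_congr rfl (fun b _ => hpt b), Finset.sum_add_distrib,
      Finset.sum_add_distrib, Finset.sum_ite_eq', Finset.sum_ite_eq', ← Finset.mul_sum]
    simp only [Finset.mem_univ, if_pos]
    ring
  -- row sums for rows outside σ (vector constant on σ)
  have hout : ∀ k, k ∉ σ → ∀ c : ℝ,
      ∑ b : Fin m, ctlnW E ε δ k (v b) * c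
        = (-(1 + δ) * m + (δ + ε) * ((Finset.univ.filter (fun b => E (v b) k)).card : ℝ)) * c := by
    intro k hk c
    have hpt : ∀ b : Fin m, ctlnW E ε δ k (v b) * c
        = -(1 + δ) * c + (if E (v b) k then (δ + ε) * c else 0) := by
      intro b
      unfold ctlnW
      rw [if_neg (by intro h; exact hk (by rw [← hvrange]; exact ⟨b, h.symm⟩))]
      split_ifs <;> ring
    rw [Finset.sum_congr rfl (fun b _ => hpt b), Finset.sum_add_distrib, Finset.sum_const,
      ← Finset.sum_filter, Finset.sum_const]
    simp only [Finset.card_univ, Fintype.card_fin, nsmul_eq_mul]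
    ring
  -- counting edges from σ into k
  have hcard : ∀ k, k ∉ σ →
      {j | j ∈ σ ∧ E j k}.ncard = (Finset.univ.filter (fun b => E (v b) k)).card := by
    intro k hk
    have hset : {j | j ∈ σ ∧ E j k} = v '' {b | E (v b) k} := by
      ext j
      constructor
      · rintro ⟨hjσ, hjE⟩
        rw [← hvrange] at hjσ; obtain ⟨b, rfl⟩ := hjσ
        exact ⟨b, hjE, rfl⟩
      · rintro ⟨b, hb, rfl⟩
        exact ⟨by rw [← hvrange]; exact ⟨b, rfl⟩, hb⟩
    rw [hset, Set.ncard_image_of_injective _ hvinj, Set.ncard_eq_toFinset_card']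
    congr 1
    simp [Set.toFinset_setOf]
  constructor
  · rintro ⟨x, ⟨hxnn, hxfix⟩, hsupp⟩
    intro k hk hge2
    have hx0 : ∀ j, j ∉ σ → x j = 0 := by
      intro j hj
      by_contra h
      have hpos : 0 < x j := lt_of_le_of_ne (hxnn j) (Ne.symm h)
      exact hj (hsupp ▸ (hpos : j ∈ support x))
    have hxpos : ∀ b : Fin m, 0 < x (v b) := by
      intro b
      have hmem : v b ∈ σ := by rw [← hvrange]; exact ⟨b, rfl⟩
      rw [← hsupp] at hmem; exact hmem
    have heq : ∀ a : Fin m, δ * x (v a)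
        = (1 + δ) * (∑ b, x (v b)) - (δ + ε) * x (v (a - 1)) - θ := by
      intro a
      have hT := hxfix (v a)
      rw [hrow x hx0 a] at hT
      have hval : x (v a) = -(1 + δ) * (∑ b, x (v b)) + (1 + δ) * x (v a)
          + (δ + ε) * x (v (a - 1)) + θ := by
        rcases le_or_gt (-(1 + δ) * (∑ b, x (v b)) + (1 + δ) * x (v a)
            + (δ + ε) * x (v (a - 1)) + θ) 0 with h | h
        · rw [max_eq_left h] at hT
          exact absurd (hT ▸ hxpos a) (lt_irrefl 0)
        · rw [max_eq_right h.le] at hT; exact hT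
      linarith
    obtain ⟨amax, -, hamax⟩ :=
      Finset.exists_max_image Finset.univ (fun b => x (v b)) Finset.univ_nonempty
    obtain ⟨amin, -, hamin⟩ :=
      Finset.exists_min_image Finset.univ (fun b => x (v b)) Finset.univ_nonempty
    have e1 := heq (amin + 1)
    have e2 := heq (amax + 1)
    rw [add_sub_cancel_right] at e1 e2
    have i1 : x (v (amin + 1)) ≤ x (v amax) := hamax _ (Finset.mem_univ _)
    have i2 : x (v amin) ≤ x (v (amax + 1)) := hamin _ (Finset.mem_univ _)
    have iμM : x (v amin) ≤ x (v amax) := hamin _ (Finset.mem_univ _)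
    have hMμ : x (v amax) ≤ x (v amin) := by
      nlinarith [mul_le_mul_of_nonneg_left i1 hδ.le, mul_le_mul_of_nonneg_left i2 hδ.le]
    have hconst : ∀ b : Fin m, x (v b) = x (v amax) := by
      intro b
      have hle : x (v b) ≤ x (v amax) := hamax _ (Finset.mem_univ _)
      have hge : x (v amin) ≤ x (v b) := hamin _ (Finset.mem_univ _)
      linarith
    set c := x (v amax) with hc
    have hcpos : 0 < c := hxpos amax
    have hS : (∑ b, x (v b)) = m * c := by
      rw [Finset.sum_congr rfl (fun b _ => hconst b), Finset.sum_const, Finset.card_univ,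
        Fintype.card_fin, nsmul_eq_mul]
    have hθc : θ = ((1 + δ) * m - 2 * δ - ε) * c := by
      have ha := heq amax
      rw [hS, hconst (amax - 1), hconst amax] at ha
      linear_combination ha
    have hxk0 : x k = 0 := hx0 k hk
    have hTk := hxfix k
    rw [sum_restrict_aux v hvinj x (by rw [hvrange]; exact hx0) _,
      Finset.sum_congr rfl (fun b _ => by rw [hconst b]), hout k hk c] at hTk
    set dF := ((Finset.univ.filter (fun b => E (v b) k)).card : ℝ) with hdF
    have hle0 : (-(1 + δ) * m + (δ + ε) * dF) * c + θ ≤ 0 := by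
      by_contra h
      push_neg at h
      rw [hxk0, max_eq_right h.le] at hTk
      linarith
    have hd2 : (2 : ℝ) ≤ dF := by
      rw [hdF]
      have := hcard k hk
      exact_mod_cast this ▸ hge2
    nlinarith [mul_pos hε hcpos,
      mul_nonneg (mul_nonneg (by linarith : (0:ℝ) ≤ δ + ε) (by linarith : (0:ℝ) ≤ dF - 2)) hcpos.le]
  · intro hcond
    set c : ℝ := θ / ((1 + δ) * m - 2 * δ - ε) with hcdef
    have hcpos : 0 < c := div_pos hθ hD
    have hθc : θ = ((1 + δ) * m - 2 * δ - ε) * c := by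
      rw [hcdef]; field_simp
      exact (div_self (ne_of_gt (by linarith))).symm
    set x : Fin n → ℝ := fun j => if j ∈ σ then c else 0 with hxdef
    have hx0 : ∀ j, j ∉ σ → x j = 0 := fun j hj => if_neg hj
    have hxσ : ∀ b : Fin m, x (v b) = c := by
      intro b
      have : v b ∈ σ := by rw [← hvrange]; exact ⟨b, rfl⟩
      exact if_pos this
    refine ⟨x, ⟨?_, ?_⟩, ?_⟩
    · intro i
      by_cases hi : i ∈ σ
      · rw [hxdef]; simp only [if_pos hi]; exact hcpos.le
      · rw [hx0 i hi]
    · intro i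
      by_cases hi : i ∈ σ
      · obtain ⟨a, rfl⟩ : ∃ a, v a = i := by rw [← hvrange] at hi; exact hi
        rw [hrow x hx0 a, hxσ a, hxσ (a - 1),
          Finset.sum_congr rfl (fun b _ => hxσ b), Finset.sum_const, Finset.card_univ,
          Fintype.card_fin, nsmul_eq_mul]
        have hval : -(1 + δ) * ((m : ℝ) * c) + (1 + δ) * c + (δ + ε) * c + θ = c := by
          linear_combination hθc
        rw [hval, max_eq_right hcpos.le]
      · rw [hx0 i hi, sum_restrict_aux v hvinj x (by rw [hvrange]; exact hx0) _,
          Finset.sum_congr rfl (fun b _ => by rw [hxσ b]), hout i hi c]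
        have hd1 : ((Finset.univ.filter (fun b => E (v b) i)).card : ℝ) ≤ 1 := by
          have hn := hcond i hi
          rw [hcard i hi] at hn
          have : (Finset.univ.filter (fun b => E (v b) i)).card ≤ 1 := by omega
          exact_mod_cast this
        rw [max_eq_left ?_]
        set dF := ((Finset.univ.filter (fun b => E (v b) i)).card : ℝ)
        have hdnn : (0 : ℝ) ≤ dF := Nat.cast_nonneg _
        nlinarith [mul_pos hδ hcpos, mul_nonneg (mul_nonneg (by linarith : (0:ℝ) ≤ δ + ε)
          (by linarith : (0:ℝ) ≤ 1 - dF)) hcpos.le]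
    · ext j
      simp only [support, Set.mem_setOf_eq]
      constructor
      · intro hpos
        by_contra hj
        rw [hx0 j hj] at hpos
        exact lt_irrefl 0 hpos
      · intro hj
        have hxj : x j = c := if_pos hj
        rw [hxj]; exact hcpos
end

section
/- Let G be a directed graph on {1,…,n} with parameters ε, δ, θ in the legal range, and let σ ⊆ {1,…,n} with |σ| = m be such that the induced subgraph G|_σ is a clique (every ordered pair of distinct vertices of σ is joined by an edge in both directions). Then σ ∈ FP(G,ε,δ) if and only if σ is target-free, i.e., there is no vertex k ∉ σ that receives an edge from every vertex of σ. -/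
open scoped Classical

/-- if G|_σ is a clique (all-to-all bidirectionally connected), then
σ ∈ FP(G) iff σ is target-free: no vertex k ∉ σ receives an edge from every vertex of σ. -/
theorem statement_8 {n : ℕ} (E : Fin n → Fin n → Prop)
    (h_irrefl : ∀ i, ¬ E i i)
    (ε δ θ : ℝ) (hpar : legalRange ε δ θ)
    (σ : Set (Fin n))
    (hclique : ∀ i ∈ σ, ∀ j ∈ σ, i ≠ j → E i j) :
    σ ∈ FP E ε δ θ ↔ ¬ ∃ k, k ∉ σ ∧ ∀ j ∈ σ, E j k := by
  obtain ⟨hδ, hθ, hε, hεlt⟩ := hpar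
  have hε1 : ε < 1 := lt_trans hεlt (by rw [div_lt_one (by linarith)]; linarith)
  constructor
  · -- forward direction
    rintro ⟨x, ⟨hx0, hxe⟩, hsupp⟩ ⟨k, hk, hkt⟩
    have hxσ : ∀ j, x j = 0 ∨ j ∈ σ := by
      intro j
      by_cases h : j ∈ σ
      · exact Or.inr h
      · left
        have : j ∉ support x := by rw [hsupp]; exact h
        have : ¬ 0 < x j := this
        linarith [hx0 j]
    set S := ∑ j, x j with hS
    have hsum_k : ∑ j, ctlnW E ε δ k j * x j = (-1 + ε) * S := by
      rw [hS, Finset.mul_sum]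
      refine Finset.sum_congr rfl fun j _ => ?_
      rcases hxσ j with h | h
      · simp [h]
      · have hkj : k ≠ j := fun e => hk (e ▸ h)
        simp [ctlnW, hkj, hkt j h]
    have hxk : x k = 0 := by
      rcases hxσ k with h | h
      · exact h
      · exact absurd h hk
    have hle : (-1 + ε) * S + θ ≤ 0 := by
      have := hxe k
      rw [hxk, hsum_k] at this
      by_contra hcon
      push_neg at hcon
      rw [max_eq_right (le_of_lt hcon)] at this
      linarith
    by_cases hne : ∃ i, i ∈ σ
    · obtain ⟨i, hi⟩ := hne
      have hxi : 0 < x i := by rw [← hsupp] at hi; exact hi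
      have hsub : ∑ j, ((-1 + ε) * x j - ctlnW E ε δ i j * x j)
          = ∑ j, (if j = i then (-1 + ε) * x i else 0) := by
        refine Finset.sum_congr rfl fun j _ => ?_
        by_cases hji : j = i
        · subst hji; simp [ctlnW]
        · rcases hxσ j with h | h
          · simp [h, hji]
          · have : E j i := hclique j h i hi hji
            have hij : i ≠ j := fun e => hji e.symm
            simp [ctlnW, hij, this, hji]
      rw [Finset.sum_ite_eq' Finset.univ i (fun _ => (-1 + ε) * x i)] at hsub
      simp only [Finset.mem_univ, if_true] at hsub
      rw [Finset.sum_sub_distrib, ← Finset.mul_sum, ← hS] at hsub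
      have hsum_i : ∑ j, ctlnW E ε δ i j * x j = (-1 + ε) * S - (-1 + ε) * x i := by
        linarith
      have heq : x i = (-1 + ε) * S - (-1 + ε) * x i + θ := by
        have := hxe i
        rw [hsum_i] at this
        rcases le_or_gt ((-1 + ε) * S - (-1 + ε) * x i + θ) 0 with h | h
        · rw [max_eq_left h] at this; linarith
        · rw [max_eq_right h.le] at this; exact this
      nlinarith
    · push_neg at hne
      have : S = 0 := by
        rw [hS]
        exact Finset.sum_eq_zero fun j _ => (hxσ j).resolve_right (hne j)
      rw [this] at hle
      linarith
  · -- backward direction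
    intro htf
    push_neg at htf
    by_cases hne : ∃ i, i ∈ σ
    · set T : Finset (Fin n) := Finset.univ.filter (fun j => j ∈ σ) with hT
      have hmemT : ∀ j, j ∈ T ↔ j ∈ σ := by
        intro j; simp [hT]
      set m : ℕ := T.card with hm
      have hm1 : 1 ≤ m := by
        obtain ⟨i, hi⟩ := hne
        exact Finset.card_pos.mpr ⟨i, (hmemT i).mpr hi⟩
      have hmR : (1 : ℝ) ≤ (m : ℝ) := by exact_mod_cast hm1
      set d : ℝ := 1 + (1 - ε) * ((m : ℝ) - 1) with hd
      have hdpos : 0 < d := by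
        have : 0 ≤ (1 - ε) * ((m : ℝ) - 1) := mul_nonneg (by linarith) (by linarith)
        rw [hd]; linarith
      set c : ℝ := θ / d with hc
      have hcpos : 0 < c := div_pos hθ hdpos
      have hcd : c * d = θ := div_mul_cancel₀ θ hdpos.ne'
      have hkey : ((m : ℝ) - 1) * ((-1 + ε) * c) + θ = c := by
        rw [← hcd, hd]; ring
      refine ⟨fun i => if i ∈ σ then c else 0, ⟨fun i => ?_, fun i => ?_⟩, ?_⟩
      · dsimp only; split_ifs
        · exact hcpos.le
        · exact le_rfl
      · have hsum : (∑ j, ctlnW E ε δ i j * (if j ∈ σ then c else 0))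
            = ∑ j ∈ T, ctlnW E ε δ i j * c := by
          rw [hT, Finset.sum_filter]
          refine Finset.sum_congr rfl fun j _ => ?_
          by_cases h : j ∈ σ <;> simp [h]
        dsimp only
        rw [hsum]
        by_cases hi : i ∈ σ
        · have hiT : i ∈ T := (hmemT i).mpr hi
          rw [← Finset.sum_erase_add T _ hiT]
          have hWii : ctlnW E ε δ i i = 0 := by simp [ctlnW]
          have herase : ∑ j ∈ T.erase i, ctlnW E ε δ i j * c
              = ((m : ℝ) - 1) * ((-1 + ε) * c) := by
            have hcongr : ∀ j ∈ T.erase i, ctlnW E ε δ i j * c = (-1 + ε) * c := by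
              intro j hj
              obtain ⟨hji, hjT⟩ := Finset.mem_erase.mp hj
              have hjσ : j ∈ σ := (hmemT j).mp hjT
              have : E j i := hclique j hjσ i hi hji
              have hij : i ≠ j := fun e => hji e.symm
              simp [ctlnW, hij, this]
            rw [Finset.sum_congr rfl hcongr, Finset.sum_const,
              Finset.card_erase_of_mem hiT, nsmul_eq_mul]
            congr 1
            rw [Nat.cast_sub hm1, Nat.cast_one]
          rw [herase, hWii, zero_mul, add_zero, hkey, if_pos hi,
            max_eq_right hcpos.le]
        · rw [if_neg hi]
          obtain ⟨j0, hj0σ, hj0E⟩ := htf i hi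
          have hj0T : j0 ∈ T := (hmemT j0).mpr hj0σ
          have hij0 : i ≠ j0 := fun e => hi (e ▸ hj0σ)
          have hWij0 : ctlnW E ε δ i j0 = -1 - δ := by
            simp [ctlnW, hij0, hj0E]
          have hbound : ∑ j ∈ T, ctlnW E ε δ i j * c
              ≤ ((m : ℝ) - 1) * ((-1 + ε) * c) + (-1 - δ) * c := by
            rw [← Finset.sum_erase_add T _ hj0T, hWij0]
            have h1 : ∑ j ∈ T.erase j0, ctlnW E ε δ i j * c
                ≤ ∑ j ∈ T.erase j0, (-1 + ε) * c := by
              refine Finset.sum_le_sum fun j hj => ?_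
              obtain ⟨_, hjT⟩ := Finset.mem_erase.mp hj
              have hjσ : j ∈ σ := (hmemT j).mp hjT
              have hij : i ≠ j := fun e => hi (e ▸ hjσ)
              have : ctlnW E ε δ i j ≤ -1 + ε := by
                simp only [ctlnW, if_neg hij]
                split_ifs
                · exact le_rfl
                · linarith
              exact mul_le_mul_of_nonneg_right this hcpos.le
            have h2 : ∑ j ∈ T.erase j0, (-1 + ε) * c
                = ((m : ℝ) - 1) * ((-1 + ε) * c) := by
              rw [Finset.sum_const, Finset.card_erase_of_mem hj0T, nsmul_eq_mul]
              congr 1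
              rw [Nat.cast_sub hm1, Nat.cast_one]
            linarith
          have : ∑ j ∈ T, ctlnW E ε δ i j * c + θ ≤ -δ * c := by
            have := hkey
            nlinarith
          have hneg : ∑ j ∈ T, ctlnW E ε δ i j * c + θ ≤ 0 := by nlinarith
          rw [max_eq_left hneg]
      · ext i
        by_cases h : i ∈ σ <;> simp [support, h, hcpos, lt_irrefl]
    · push_neg at hne
      have hempty : ∀ k : Fin n, False := by
        intro k
        obtain ⟨j, hj, _⟩ := htf k (hne k)
        exact hne j hj
      refine ⟨fun _ => 0, ⟨fun i => (hempty i).elim, fun i => (hempty i).elim⟩, ?_⟩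
      ext i
      exact (hempty i).elim
end

section
/- Let G be a directed graph on {1,…,n} with parameters ε, δ, θ in the legal range, and let σ ⊆ {1,…,n}. Then the following are equivalent: (i) σ ∈ FP(G,ε,δ), σ is minimal under inclusion in FP(G,ε,δ), and σ is minimal under inclusion in FP(G|_σ,ε,δ); (ii) σ ∈ FP(G,ε,δ) and FP(G|_σ,ε,δ) = {σ}. -/
open scoped Classical

/-- σ is a core fixed point support (σ ∈ FP(G), minimal in FP(G), and
minimal in FP(G|_σ)) if and only if σ ∈ FP(G) and FP(G|_σ) = {σ}. -/
theorem statement_11 {n : ℕ} (E : Fin n → Fin n → Prop)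
    (h_irrefl : ∀ i, ¬ E i i)
    (ε δ θ : ℝ) (hpar : legalRange ε δ θ)
    (σ : Set (Fin n)) :
    (σ ∈ FP E ε δ θ ∧
      (∀ τ ∈ FP E ε δ θ, τ ⊆ σ → τ = σ) ∧
      (Set.univ ∈ FP (restrict E σ) ε δ θ ∧
        ∀ τ ∈ FP (restrict E σ) ε δ θ, τ ⊆ Set.univ → τ = Set.univ))
    ↔ (σ ∈ FP E ε δ θ ∧ FP (restrict E σ) ε δ θ = {Set.univ}) := by
  constructor
  · rintro ⟨h1, _h2, h3, h4⟩
    refine ⟨h1, Set.ext fun τ => ?_⟩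
    simp only [Set.mem_singleton_iff]
    exact ⟨fun hτ => h4 τ hτ (Set.subset_univ τ), fun h => h ▸ h3⟩
  · rintro ⟨h1, hFP⟩
    refine ⟨h1, ?_, ?_, ?_⟩
    · intro τ hτ hτσ
      obtain ⟨x, hx, hsupp⟩ := hτ
      -- restrict x to σ
      have hzero : ∀ j : Fin n, j ∉ σ → x j = 0 := by
        intro j hj
        by_contra h
        have : 0 < x j := lt_of_le_of_ne (hx.1 j) (Ne.symm h)
        exact hj (hτσ (hsupp ▸ this))
      have hsum : ∀ i : ↥σ,
          (∑ j : ↥σ, ctlnW (restrict E σ) ε δ i j * x (j : Fin n))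
            = ∑ j, ctlnW E ε δ (i : Fin n) j * x j := by
        intro i
        have hW : ∀ j : ↥σ, ctlnW (restrict E σ) ε δ i j
            = ctlnW E ε δ (i : Fin n) (j : Fin n) := by
          intro j
          simp only [ctlnW, restrict]
          by_cases h : (i : Fin n) = (j : Fin n) <;> simp [h, Subtype.ext_iff] <;> rfl
        calc (∑ j : ↥σ, ctlnW (restrict E σ) ε δ i j * x (j : Fin n))
            = ∑ j : ↥σ, ctlnW E ε δ (i : Fin n) (j : Fin n) * x (j : Fin n) := by
              exact Finset.sum_congr rfl fun j _ => by rw [hW]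
          _ = ∑ j ∈ σ.toFinset, ctlnW E ε δ (i : Fin n) j * x j := by
              rw [← Finset.sum_set_coe]
          _ = ∑ j, ctlnW E ε δ (i : Fin n) j * x j := by
              apply Finset.sum_subset (Finset.subset_univ _)
              intro j _ hj
              rw [hzero j (by simpa using hj), mul_zero]
      have hy : isFixedPoint (ctlnW (restrict E σ) ε δ) θ (fun i : ↥σ => x i) :=
        ⟨fun i => hx.1 i, fun i => by rw [hsum i]; exact hx.2 i⟩
      have hmem : (Subtype.val ⁻¹' τ : Set ↥σ) ∈ FP (restrict E σ) ε δ θ := by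
        refine ⟨fun i : ↥σ => x i, hy, ?_⟩
        ext i
        simp [support, ← hsupp]
      rw [hFP, Set.mem_singleton_iff] at hmem
      have hστ : σ ⊆ τ := by
        intro i hi
        have : (⟨i, hi⟩ : ↥σ) ∈ (Subtype.val ⁻¹' τ : Set ↥σ) := by
          rw [hmem]; trivial
        exact this
      exact Set.Subset.antisymm hτσ hστ
    · rw [hFP]; rfl
    · intro τ hτ _
      rw [hFP, Set.mem_singleton_iff] at hτ
      exact hτ
end

section
/- Let G be the complete directed graph on {1,…,n} (for every pair of distinct vertices i, j, both edges i→j and j→i are present), i.e., a clique. Then for all parameters ε, δ, θ in the legal range, FP(G,ε,δ) = {{1,…,n}}; that is, every clique is a core motif. -/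
open scoped Classical

lemma clique_row_sum (n : ℕ) (ε δ : ℝ) (x : Fin n → ℝ) (i : Fin n) :
    ∑ j, ctlnW (fun i j : Fin n => i ≠ j) ε δ i j * x j
      = (ε - 1) * ((∑ j, x j) - x i) := by
  have h : ∀ j, ctlnW (fun i j : Fin n => i ≠ j) ε δ i j * x j
      = (ε - 1) * x j - (if j = i then (ε - 1) * x i else 0) := by
    intro j
    by_cases h : i = j
    · subst h; simp [ctlnW]
    · have h' : j ≠ i := Ne.symm h
      simp only [ctlnW, if_neg h, if_pos h', if_neg h']
      ring
  rw [Finset.sum_congr rfl fun j _ => h j, Finset.sum_sub_distrib,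
    Finset.sum_ite_eq' Finset.univ i, ← Finset.mul_sum]
  simp only [Finset.mem_univ, if_true]
  ring

/-- for the complete directed graph (clique) on n vertices,
FP(G) = {full vertex set}; i.e. every clique is a core motif. -/
theorem statement_12 (n : ℕ) (ε δ θ : ℝ) (hpar : legalRange ε δ θ) :
    FP (fun i j : Fin n => i ≠ j) ε δ θ = {Set.univ} := by
  obtain ⟨hδ, hθ, hε, hεδ⟩ := hpar
  have hε1 : ε < 1 := lt_trans hεδ (by rw [div_lt_one (by linarith)]; linarith)
  ext σ
  simp only [Set.mem_singleton_iff]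
  constructor
  · rintro ⟨x, ⟨hx0, hfix⟩, rfl⟩
    have hfix' : ∀ i, x i = max 0 ((ε - 1) * ((∑ j, x j) - x i) + θ) := by
      intro i
      have h := hfix i
      rw [clique_row_sum] at h
      exact h
    -- every coordinate is positive
    have hpos : ∀ i, 0 < x i := by
      intro k
      by_contra hk
      have hk0 : x k = 0 := le_antisymm (not_lt.mp hk) (hx0 k)
      have h1 : (ε - 1) * (∑ j, x j) + θ ≤ 0 := by
        have := hfix' k
        rw [hk0, sub_zero] at this
        by_contra h
        have := max_eq_right (le_of_lt (not_le.mp h)) ▸ this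
        linarith [this]
      have hS : 0 < ∑ j, x j := by nlinarith
      obtain ⟨j, _, hj⟩ : ∃ j ∈ Finset.univ, 0 < x j := by
        by_contra h
        push_neg at h
        have : (∑ j, x j) ≤ 0 := Finset.sum_nonpos fun j hjm => h j hjm
        linarith
      have h2 : x j = (ε - 1) * ((∑ i, x i) - x j) + θ := by
        have := hfix' j
        rcases le_or_gt ((ε - 1) * ((∑ i, x i) - x j) + θ) 0 with hc | hc
        · rw [max_eq_left hc] at this; linarith
        · rw [max_eq_right (le_of_lt hc)] at this; exact this
      nlinarith [mul_pos hε hj]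
    ext i
    simp [support, hpos i]
  · rintro rfl
    set d : ℝ := ε + (1 - ε) * n with hd
    have hdpos : 0 < d := by
      have : (0:ℝ) ≤ (1 - ε) * n := mul_nonneg (by linarith) (Nat.cast_nonneg n)
      linarith
    set c : ℝ := θ / d with hc
    have hcpos : 0 < c := div_pos hθ hdpos
    refine ⟨fun _ => c, ⟨fun i => le_of_lt hcpos, fun i => ?_⟩, ?_⟩
    · rw [clique_row_sum]
      have hsum : (∑ _j : Fin n, c) = n * c := by
        simp [Finset.sum_const, mul_comm]
      rw [hsum]
      have hval : (ε - 1) * ((n : ℝ) * c - c) + θ = c := by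
        have : c * d = θ := by
          rw [hc]; field_simp
        rw [hd] at this
        nlinarith [this]
      rw [hval, max_eq_right (le_of_lt hcpos)]
    · ext i; simp [support, hcpos]
end

section
/- Let G be a directed graph on {1,…,n} with parameters ε, δ, θ in the legal range, and suppose i is a proper source of G (no incoming edges and at least one outgoing edge). Then FP(G,ε,δ) = FP(G|_{{1,…,n}∖{i}}, ε, δ); that is, removing a proper source does not change the set of fixed point supports. -/
open scoped Classical

section helpers
variable {n : ℕ} {E : Fin n → Fin n → Prop} {ε δ θ : ℝ}

lemma rowSum_i {i : Fin n} (hsrc : ∀ j, ¬ E j i) (x : Fin n → ℝ) :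
    ∑ j, ctlnW E ε δ i j * x j = (∑ j, (-1 - δ) * x j) + (1 + δ) * x i := by
  have h : ∑ j, (ctlnW E ε δ i j - (-1 - δ)) * x j = (1 + δ) * x i := by
    rw [Finset.sum_eq_single i]
    · have hii : ctlnW E ε δ i i = 0 := by simp [ctlnW]
      rw [hii]; ring
    · intro j _ hj
      have hw : ctlnW E ε δ i j = -1 - δ := by
        simp [ctlnW, Ne.symm hj, hsrc j]
      rw [hw]; ring
    · simp
  have hsplit : ∑ j, (ctlnW E ε δ i j - (-1 - δ)) * x j =
      (∑ j, ctlnW E ε δ i j * x j) - ∑ j, (-1 - δ) * x j := by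
    rw [← Finset.sum_sub_distrib]
    exact Finset.sum_congr rfl (fun j _ => by ring)
  rw [hsplit] at h
  linarith

lemma rowSum_lb (hε : 0 < ε) (hδ : 0 < δ) (x : Fin n → ℝ) (hx : ∀ j, 0 ≤ x j)
    (k : Fin n) :
    (∑ j, (-1 - δ) * x j) + (1 + δ) * x k ≤ ∑ j, ctlnW E ε δ k j * x j := by
  have hterm : ∀ j : Fin n, 0 ≤ (ctlnW E ε δ k j - (-1 - δ)) * x j := by
    intro j
    apply mul_nonneg _ (hx j)
    have : -1 - δ ≤ ctlnW E ε δ k j := by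
      unfold ctlnW; split_ifs <;> linarith
    linarith
  have h : (ctlnW E ε δ k k - (-1 - δ)) * x k ≤
      ∑ j, (ctlnW E ε δ k j - (-1 - δ)) * x j :=
    Finset.single_le_sum (fun j _ => hterm j) (Finset.mem_univ k)
  have hkk : ctlnW E ε δ k k = 0 := by simp [ctlnW]
  rw [hkk] at h
  have hsplit : ∑ j, (ctlnW E ε δ k j - (-1 - δ)) * x j =
      (∑ j, ctlnW E ε δ k j * x j) - ∑ j, (-1 - δ) * x j := by
    rw [← Finset.sum_sub_distrib]
    exact Finset.sum_congr rfl (fun j _ => by ring)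
  rw [hsplit] at h
  nlinarith

lemma rowSum_lb2 (hε : 0 < ε) (hδ : 0 < δ) (x : Fin n → ℝ) (hx : ∀ j, 0 ≤ x j)
    {i k : Fin n} (hik : i ≠ k) (hE : E i k) :
    (∑ j, (-1 - δ) * x j) + (1 + δ) * x k + (ε + δ) * x i ≤
      ∑ j, ctlnW E ε δ k j * x j := by
  have hterm : ∀ j : Fin n, 0 ≤ (ctlnW E ε δ k j - (-1 - δ)) * x j := by
    intro j
    apply mul_nonneg _ (hx j)
    have : -1 - δ ≤ ctlnW E ε δ k j := by
      unfold ctlnW; split_ifs <;> linarith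
    linarith
  have hsub : ({i, k} : Finset (Fin n)) ⊆ Finset.univ := Finset.subset_univ _
  have h : ∑ j ∈ ({i, k} : Finset (Fin n)), (ctlnW E ε δ k j - (-1 - δ)) * x j ≤
      ∑ j, (ctlnW E ε δ k j - (-1 - δ)) * x j :=
    Finset.sum_le_sum_of_subset_of_nonneg hsub (fun j _ _ => hterm j)
  rw [Finset.sum_pair hik] at h
  have hki : ctlnW E ε δ k i = -1 + ε := by
    simp [ctlnW, Ne.symm hik, hE]
  have hkk : ctlnW E ε δ k k = 0 := by simp [ctlnW]
  rw [hki, hkk] at h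
  have hsplit : ∑ j, (ctlnW E ε δ k j - (-1 - δ)) * x j =
      (∑ j, ctlnW E ε δ k j * x j) - ∑ j, (-1 - δ) * x j := by
    rw [← Finset.sum_sub_distrib]
    exact Finset.sum_congr rfl (fun j _ => by ring)
  rw [hsplit] at h
  nlinarith

/-- A proper source is dead in any fixed point. -/
lemma source_zero (hpar : legalRange ε δ θ) {i : Fin n}
    (hsrc : ∀ j, ¬ E j i) {k : Fin n} (hik : i ≠ k) (hE : E i k)
    {x : Fin n → ℝ} (hx : isFixedPoint (ctlnW E ε δ) θ x) : x i = 0 := by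
  obtain ⟨hδ, hθ, hε, _⟩ := hpar
  obtain ⟨hnn, hfix⟩ := hx
  by_contra h0
  have hxi : 0 < x i := lt_of_le_of_ne (hnn i) (Ne.symm h0)
  have heqi : x i = (∑ j, ctlnW E ε δ i j * x j) + θ := by
    have := hfix i
    rcases max_choice 0 ((∑ j, ctlnW E ε δ i j * x j) + θ) with hc | hc <;>
      rw [hc] at this
    · exact absurd this (by linarith)
    · exact this
  have hkge : (∑ j, ctlnW E ε δ k j * x j) + θ ≤ x k := by
    rw [hfix k]; exact le_max_right _ _
  have h1 := rowSum_i (ε := ε) (δ := δ) hsrc x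
  have h2 := rowSum_lb2 hε hδ x hnn hik hE
  have hxk : 0 ≤ x k := hnn k
  nlinarith

/-- Fixed points give "dead" inequality at the source once x i = 0. -/
lemma source_neg (hpar : legalRange ε δ θ) {i : Fin n}
    (hsrc : ∀ j, ¬ E j i) {k : Fin n} (hik : i ≠ k)
    {x : Fin n → ℝ} (hnn : ∀ j, 0 ≤ x j)
    (hk : (∑ j, ctlnW E ε δ k j * x j) + θ ≤ x k) (hxi : x i = 0) :
    (∑ j, ctlnW E ε δ i j * x j) + θ ≤ 0 := by
  obtain ⟨hδ, hθ, hε, _⟩ := hpar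
  have h1 := rowSum_i (ε := ε) (δ := δ) hsrc x
  have h2 := rowSum_lb (E := E) hε hδ x hnn k
  have hxk : 0 ≤ x k := hnn k
  nlinarith

lemma sum_compl_eq {i : Fin n} (f : Fin n → ℝ) (h : f i = 0) :
    ∑ k : ↥({i}ᶜ : Set (Fin n)), f k = ∑ k, f k := by
  rw [← Finset.sum_subtype (Finset.univ.erase i) (by simp [eq_comm]) f]
  rw [Finset.sum_erase _ h]

lemma ctlnW_restrict_s14 {i : Fin n} (a b : ↥({i}ᶜ : Set (Fin n))) :
    ctlnW (restrict E ({i}ᶜ : Set (Fin n))) ε δ a b = ctlnW E ε δ a b := by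
  simp only [ctlnW, restrict, Subtype.ext_iff]
  split_ifs <;> simp_all

lemma sum_transfer {i : Fin n} (x : Fin n → ℝ) (hxi : x i = 0)
    (a : ↥({i}ᶜ : Set (Fin n))) :
    ∑ b : ↥({i}ᶜ : Set (Fin n)),
        ctlnW (restrict E ({i}ᶜ : Set (Fin n))) ε δ a b * x ↑b
      = ∑ j, ctlnW E ε δ (↑a) j * x j := by
  have h1 : ∀ b : ↥({i}ᶜ : Set (Fin n)),
      ctlnW (restrict E ({i}ᶜ : Set (Fin n))) ε δ a b * x ↑b
        = (fun j => ctlnW E ε δ (↑a) j * x j) ↑b := by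
    intro b; rw [ctlnW_restrict_s14]
  rw [Finset.sum_congr rfl (fun b _ => h1 b)]
  exact sum_compl_eq (fun j => ctlnW E ε δ (↑a) j * x j) (by show ctlnW E ε δ (↑a) i * x i = 0; rw [hxi, mul_zero])

end helpers

/-- removing a proper source does not change the set of fixed point
supports: FP(G) = FP(G|_{[n] ∖ {i}}) (identifying subsets of the subtype with
subsets of Fin n via the inclusion). -/
theorem statement_14 {n : ℕ} (E : Fin n → Fin n → Prop)
    (h_irrefl : ∀ i, ¬ E i i)
    (ε δ θ : ℝ) (hpar : legalRange ε δ θ)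
    (i : Fin n) (hsource : (∀ j, ¬ E j i) ∧ (∃ j, E i j)) :
    FP E ε δ θ =
      (fun τ : Set ↥({i}ᶜ : Set (Fin n)) => Subtype.val '' τ) ''
        FP (restrict E ({i}ᶜ : Set (Fin n))) ε δ θ := by
  obtain ⟨hsrc, k, hEk⟩ := hsource
  have hik : i ≠ k := fun h => h_irrefl i (h ▸ hEk)
  ext σ'
  constructor
  · rintro ⟨x, hx, rfl⟩
    have hxi : x i = 0 := source_zero hpar hsrc hik hEk hx
    obtain ⟨hnn, hfix⟩ := hx
    set x' : ↥({i}ᶜ : Set (Fin n)) → ℝ := fun b => x ↑b with hx'def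
    refine ⟨support x', ⟨x', ⟨fun b => hnn ↑b, fun a => ?_⟩, rfl⟩, ?_⟩
    · show x ↑a = _
      rw [sum_transfer x hxi a]
      exact hfix ↑a
    · ext j
      simp only [support, Set.mem_image, Set.mem_setOf_eq]
      constructor
      · rintro ⟨b, hb, rfl⟩; exact hb
      · intro hj
        have hji : j ≠ i := by
          intro h; rw [h, hxi] at hj; exact lt_irrefl 0 hj
        exact ⟨⟨j, by simpa using hji⟩, hj, rfl⟩
  · rintro ⟨τ, ⟨x', hx', rfl⟩, rfl⟩
    obtain ⟨hnn', hfix'⟩ := hx'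
    set x : Fin n → ℝ :=
      fun j => if h : j ∈ ({i}ᶜ : Set (Fin n)) then x' ⟨j, h⟩ else 0 with hxdef
    have hxb : ∀ b : ↥({i}ᶜ : Set (Fin n)), x ↑b = x' b := by
      intro b
      simp only [hxdef, dif_pos b.2]
    have hxi : x i = 0 := by
      simp only [hxdef, dif_neg (by simp : ¬ (i ∈ ({i}ᶜ : Set (Fin n))))]
    have hnn : ∀ j, 0 ≤ x j := by
      intro j
      by_cases h : j ∈ ({i}ᶜ : Set (Fin n))
      · rw [show j = ↑(⟨j, h⟩ : ↥({i}ᶜ : Set (Fin n))) from rfl, hxb]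
        exact hnn' _
      · simp only [hxdef, dif_neg h]; exact le_refl 0
    have hfix_ne : ∀ a : Fin n, a ≠ i →
        x a = max 0 ((∑ j, ctlnW E ε δ a j * x j) + θ) := by
      intro a ha
      have hmem : a ∈ ({i}ᶜ : Set (Fin n)) := by simpa using ha
      have := hfix' ⟨a, hmem⟩
      rw [show (∑ b : ↥({i}ᶜ : Set (Fin n)),
          ctlnW (restrict E ({i}ᶜ : Set (Fin n))) ε δ ⟨a, hmem⟩ b * x' b)
        = ∑ j, ctlnW E ε δ a j * x j from by
          rw [← sum_transfer (E := E) x hxi ⟨a, hmem⟩]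
          exact Finset.sum_congr rfl (fun b _ => by rw [hxb])] at this
      rw [← hxb ⟨a, hmem⟩] at this
      exact this
    have hfix : ∀ a, x a = max 0 ((∑ j, ctlnW E ε δ a j * x j) + θ) := by
      intro a
      by_cases ha : a = i
      · subst ha
        rw [hxi]
        have hk : (∑ j, ctlnW E ε δ k j * x j) + θ ≤ x k := by
          rw [hfix_ne k (Ne.symm hik)]; exact le_max_right _ _
        exact (max_eq_left (source_neg hpar hsrc hik
          (k := k) hnn hk hxi)).symm
      · exact hfix_ne a ha
    refine ⟨x, ⟨hnn, hfix⟩, ?_⟩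
    ext j
    simp only [support, Set.mem_image, Set.mem_setOf_eq]
    constructor
    · intro hj
      have hji : j ≠ i := by
        intro h; rw [h, hxi] at hj; exact lt_irrefl 0 hj
      have hmem : j ∈ ({i}ᶜ : Set (Fin n)) := by simpa using hji
      refine ⟨⟨j, hmem⟩, ?_, rfl⟩
      rw [← hxb ⟨j, hmem⟩]; exact hj
    · rintro ⟨b, hb, rfl⟩
      rw [hxb]; exact hb
end

section
/- Let G be the directed graph on vertex set {1,2,3,4} with edges exactly 1→2, 2→3, 3→1, and 3→4. Then for all parameters ε, δ, θ in the legal range, FP(G,ε,δ) = { {4}, {1,2,3}, {1,2,3,4} }. -/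
open scoped Classical

/-- The graph of statement 19. -/
def E19 : Fin 4 → Fin 4 → Prop := fun i j =>
  (i = 0 ∧ j = 1) ∨ (i = 1 ∧ j = 2) ∨ (i = 2 ∧ j = 0) ∨ (i = 2 ∧ j = 3)

lemma hs0 (ε δ : ℝ) (x : Fin 4 → ℝ) :
    (∑ j, ctlnW E19 ε δ 0 j * x j) = (-1-δ)*x 1 + (-1+ε)*x 2 + (-1-δ)*x 3 := by
  rw [Fin.sum_univ_four]
  simp (config := { decide := true }) [ctlnW, E19]

lemma hs1 (ε δ : ℝ) (x : Fin 4 → ℝ) :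
    (∑ j, ctlnW E19 ε δ 1 j * x j) = (-1+ε)*x 0 + (-1-δ)*x 2 + (-1-δ)*x 3 := by
  rw [Fin.sum_univ_four]
  simp (config := { decide := true }) [ctlnW, E19]

lemma hs2 (ε δ : ℝ) (x : Fin 4 → ℝ) :
    (∑ j, ctlnW E19 ε δ 2 j * x j) = (-1-δ)*x 0 + (-1+ε)*x 1 + (-1-δ)*x 3 := by
  rw [Fin.sum_univ_four]
  simp (config := { decide := true }) [ctlnW, E19]

lemma hs3 (ε δ : ℝ) (x : Fin 4 → ℝ) :
    (∑ j, ctlnW E19 ε δ 3 j * x j) = (-1-δ)*x 0 + (-1-δ)*x 1 + (-1+ε)*x 2 := by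
  rw [Fin.sum_univ_four]
  simp (config := { decide := true }) [ctlnW, E19]

/-- for the graph on {1,2,3,4} with edges exactly 1→2, 2→3, 3→1, 3→4
(here encoded on Fin 4 as 0→1, 1→2, 2→0, 2→3), FP(G) = {{4}, {1,2,3}, {1,2,3,4}}
(encoded as {{3}, {0,1,2}, univ}) for all parameters in the legal range. -/
theorem statement_19 (ε δ θ : ℝ) (hpar : legalRange ε δ θ) :
    FP (fun i j : Fin 4 =>
        (i = 0 ∧ j = 1) ∨ (i = 1 ∧ j = 2) ∨ (i = 2 ∧ j = 0) ∨ (i = 2 ∧ j = 3)) ε δ θ =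
      {({3} : Set (Fin 4)), ({0, 1, 2} : Set (Fin 4)), (Set.univ : Set (Fin 4))} := by
  obtain ⟨hδ, hθ, hε, hεδ⟩ := hpar
  have hε1 : ε < 1 := by
    have h1 : δ / (δ + 1) < 1 := (div_lt_one (by linarith)).2 (by linarith)
    linarith
  show FP E19 ε δ θ = _
  ext σ
  constructor
  · rintro ⟨x, ⟨hnn, hfix⟩, rfl⟩
    have onEq : ∀ i, 0 < x i → x i = (∑ j, ctlnW E19 ε δ i j * x j) + θ := by
      intro i hi
      have h := hfix i
      rcases le_or_gt ((∑ j, ctlnW E19 ε δ i j * x j) + θ) 0 with h' | h'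
      · rw [max_eq_left h'] at h; linarith
      · rw [max_eq_right h'.le] at h; exact h
    have off : ∀ i, 0 = x i → (∑ j, ctlnW E19 ε δ i j * x j) + θ ≤ 0 := by
      intro i hi
      by_contra h'
      push_neg at h'
      have h := hfix i
      rw [max_eq_right h'.le, ← hi] at h
      linarith
    rcases (hnn 0).eq_or_lt with h0 | h0 <;>
      rcases (hnn 1).eq_or_lt with h1 | h1 <;>
        rcases (hnn 2).eq_or_lt with h2 | h2 <;>
          rcases (hnn 3).eq_or_lt with h3 | h3
    -- zzzz
    · exfalso
      have o0 := off 0 h0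
      rw [hs0, ← h1, ← h2, ← h3] at o0
      linarith
    -- zzzp : support {3}, valid
    · have hsupp : support x = {3} := by
        ext i
        fin_cases i <;>
          simp (config := { decide := true }) [support, ← h0, ← h1, ← h2, h3]
      rw [hsupp]; exact Set.mem_insert _ _
    -- zzpz : {2}
    · exfalso
      have e2 := onEq 2 h2
      rw [hs2, ← h0, ← h1, ← h3] at e2
      have o0 := off 0 h0
      rw [hs0, ← h1, ← h3] at o0
      nlinarith [mul_pos hε h2]
    -- zzpp : {2,3}
    · exfalso
      have e2 := onEq 2 h2
      rw [hs2, ← h0, ← h1] at e2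
      have e3 := onEq 3 h3
      rw [hs3, ← h0, ← h1] at e3
      nlinarith [mul_pos hε h2, mul_pos hδ h3]
    -- zpzz : {1}
    · exfalso
      have e1 := onEq 1 h1
      rw [hs1, ← h0, ← h2, ← h3] at e1
      have o2 := off 2 h2
      rw [hs2, ← h0, ← h3] at o2
      nlinarith [mul_pos hε h1]
    -- zpzp : {1,3}
    · exfalso
      have e1 := onEq 1 h1
      rw [hs1, ← h0, ← h2] at e1
      have o2 := off 2 h2
      rw [hs2, ← h0] at o2
      nlinarith [mul_pos hε h1]
    -- zppz : {1,2}
    · exfalso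
      have e1 := onEq 1 h1
      rw [hs1, ← h0, ← h3] at e1
      have e2 := onEq 2 h2
      rw [hs2, ← h0, ← h3] at e2
      nlinarith [mul_pos hε h1, mul_pos hδ h2]
    -- zppp : {1,2,3}
    · exfalso
      have e1 := onEq 1 h1
      rw [hs1, ← h0] at e1
      have e2 := onEq 2 h2
      rw [hs2, ← h0] at e2
      nlinarith [mul_pos hε h1, mul_pos hδ h2]
    -- pzzz : {0}
    · exfalso
      have e0 := onEq 0 h0
      rw [hs0, ← h1, ← h2, ← h3] at e0
      have o1 := off 1 h1
      rw [hs1, ← h2, ← h3] at o1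
      nlinarith [mul_pos hε h0]
    -- pzzp : {0,3}
    · exfalso
      have e0 := onEq 0 h0
      rw [hs0, ← h1, ← h2] at e0
      have o1 := off 1 h1
      rw [hs1, ← h2] at o1
      nlinarith [mul_pos hε h0]
    -- pzpz : {0,2}
    · exfalso
      have e0 := onEq 0 h0
      rw [hs0, ← h1, ← h3] at e0
      have e2 := onEq 2 h2
      rw [hs2, ← h1, ← h3] at e2
      nlinarith [mul_pos hδ h0, mul_pos hε h2]
    -- pzpp : {0,2,3}
    · exfalso
      have e0 := onEq 0 h0
      rw [hs0, ← h1] at e0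
      have e2 := onEq 2 h2
      rw [hs2, ← h1] at e2
      nlinarith [mul_pos hδ h0, mul_pos hε h2]
    -- ppzz : {0,1}
    · exfalso
      have e0 := onEq 0 h0
      rw [hs0, ← h2, ← h3] at e0
      have e1 := onEq 1 h1
      rw [hs1, ← h2, ← h3] at e1
      nlinarith [mul_pos hε h0, mul_pos hδ h1]
    -- ppzp : {0,1,3}
    · exfalso
      have e0 := onEq 0 h0
      rw [hs0, ← h2] at e0
      have e1 := onEq 1 h1
      rw [hs1, ← h2] at e1
      nlinarith [mul_pos hε h0, mul_pos hδ h1]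
    -- pppz : {0,1,2}, valid
    · have hsupp : support x = {0, 1, 2} := by
        ext i
        fin_cases i <;>
          simp (config := { decide := true }) [support, h0, h1, h2, ← h3]
      rw [hsupp]
      exact Set.mem_insert_of_mem _ (Set.mem_insert _ _)
    -- pppp : univ, valid
    · have hsupp : support x = Set.univ :=
        Set.eq_univ_of_forall (fun i => by fin_cases i <;> assumption)
      rw [hsupp]
      exact Set.mem_insert_of_mem _ (Set.mem_insert_of_mem _ rfl)
  · intro hσ
    simp only [Set.mem_insert_iff, Set.mem_singleton_iff] at hσ
    rcases hσ with rfl | rfl | rfl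
    · -- σ = {3}
      refine ⟨![0, 0, 0, θ], ⟨fun i => ?_, fun i => ?_⟩, ?_⟩
      · fin_cases i <;> simp [hθ.le]
      · fin_cases i
        · rw [show ((⟨0, by norm_num⟩ : Fin 4)) = 0 from rfl, hs0]
          simp only [Matrix.cons_val_zero, Matrix.cons_val_one, Matrix.head_cons,
            Matrix.cons_val_two, Matrix.tail_cons, Matrix.cons_val_three]
          rw [max_eq_left (by nlinarith)]
        · rw [show ((⟨1, by norm_num⟩ : Fin 4)) = 1 from rfl, hs1]
          simp only [Matrix.cons_val_zero, Matrix.cons_val_one, Matrix.head_cons,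
            Matrix.cons_val_two, Matrix.tail_cons, Matrix.cons_val_three]
          rw [max_eq_left (by nlinarith)]
        · rw [show ((⟨2, by norm_num⟩ : Fin 4)) = 2 from rfl, hs2]
          simp only [Matrix.cons_val_zero, Matrix.cons_val_one, Matrix.head_cons,
            Matrix.cons_val_two, Matrix.tail_cons, Matrix.cons_val_three]
          rw [max_eq_left (by nlinarith)]
        · rw [show ((⟨3, by norm_num⟩ : Fin 4)) = 3 from rfl, hs3]
          simp only [Matrix.cons_val_zero, Matrix.cons_val_one, Matrix.head_cons,
            Matrix.cons_val_two, Matrix.tail_cons, Matrix.cons_val_three]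
          rw [max_eq_right (by nlinarith)]
          ring
      · ext i
        fin_cases i <;> simp (config := { decide := true }) [support, hθ]
    · -- σ = {0,1,2}
      have hd : (0:ℝ) < 3 + δ - ε := by linarith
      set v : ℝ := θ / (3 + δ - ε) with hv
      have hvpos : 0 < v := div_pos hθ hd
      have hveq : v * (3 + δ - ε) = θ := div_mul_cancel₀ θ hd.ne'
      refine ⟨![v, v, v, 0], ⟨fun i => ?_, fun i => ?_⟩, ?_⟩
      · fin_cases i <;> simp [hvpos.le]
      · fin_cases i
        · rw [show ((⟨0, by norm_num⟩ : Fin 4)) = 0 from rfl, hs0]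
          simp only [Matrix.cons_val_zero, Matrix.cons_val_one, Matrix.head_cons,
            Matrix.cons_val_two, Matrix.tail_cons, Matrix.cons_val_three]
          rw [show (-1-δ)*v + (-1+ε)*v + (-1-δ)*0 + θ = v by linear_combination -hveq,
            max_eq_right hvpos.le]
        · rw [show ((⟨1, by norm_num⟩ : Fin 4)) = 1 from rfl, hs1]
          simp only [Matrix.cons_val_zero, Matrix.cons_val_one, Matrix.head_cons,
            Matrix.cons_val_two, Matrix.tail_cons, Matrix.cons_val_three]
          rw [show (-1+ε)*v + (-1-δ)*v + (-1-δ)*0 + θ = v by linear_combination -hveq,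
            max_eq_right hvpos.le]
        · rw [show ((⟨2, by norm_num⟩ : Fin 4)) = 2 from rfl, hs2]
          simp only [Matrix.cons_val_zero, Matrix.cons_val_one, Matrix.head_cons,
            Matrix.cons_val_two, Matrix.tail_cons, Matrix.cons_val_three]
          rw [show (-1-δ)*v + (-1+ε)*v + (-1-δ)*0 + θ = v by linear_combination -hveq,
            max_eq_right hvpos.le]
        · rw [show ((⟨3, by norm_num⟩ : Fin 4)) = 3 from rfl, hs3]
          simp only [Matrix.cons_val_zero, Matrix.cons_val_one, Matrix.head_cons,
            Matrix.cons_val_two, Matrix.tail_cons, Matrix.cons_val_three]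
          rw [max_eq_left (by nlinarith [mul_pos hδ hvpos])]
      · ext i
        fin_cases i <;> simp (config := { decide := true }) [support, hvpos]
    · -- σ = univ
      have hd : (0:ℝ) < 4 + 2*δ - ε := by linarith
      set u : ℝ := θ / (4 + 2*δ - ε) with hu
      have hupos : 0 < u := div_pos hθ hd
      have hueq : u * (4 + 2*δ - ε) = θ := div_mul_cancel₀ θ hd.ne'
      refine ⟨![u, u, u, u], ⟨fun i => ?_, fun i => ?_⟩, ?_⟩
      · fin_cases i <;> simp [hupos.le]
      · fin_cases i
        · rw [show ((⟨0, by norm_num⟩ : Fin 4)) = 0 from rfl, hs0]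
          simp only [Matrix.cons_val_zero, Matrix.cons_val_one, Matrix.head_cons,
            Matrix.cons_val_two, Matrix.tail_cons, Matrix.cons_val_three]
          rw [show (-1-δ)*u + (-1+ε)*u + (-1-δ)*u + θ = u by linear_combination -hueq,
            max_eq_right hupos.le]
        · rw [show ((⟨1, by norm_num⟩ : Fin 4)) = 1 from rfl, hs1]
          simp only [Matrix.cons_val_zero, Matrix.cons_val_one, Matrix.head_cons,
            Matrix.cons_val_two, Matrix.tail_cons, Matrix.cons_val_three]
          rw [show (-1+ε)*u + (-1-δ)*u + (-1-δ)*u + θ = u by linear_combination -hueq,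
            max_eq_right hupos.le]
        · rw [show ((⟨2, by norm_num⟩ : Fin 4)) = 2 from rfl, hs2]
          simp only [Matrix.cons_val_zero, Matrix.cons_val_one, Matrix.head_cons,
            Matrix.cons_val_two, Matrix.tail_cons, Matrix.cons_val_three]
          rw [show (-1-δ)*u + (-1+ε)*u + (-1-δ)*u + θ = u by linear_combination -hueq,
            max_eq_right hupos.le]
        · rw [show ((⟨3, by norm_num⟩ : Fin 4)) = 3 from rfl, hs3]
          simp only [Matrix.cons_val_zero, Matrix.cons_val_one, Matrix.head_cons,
            Matrix.cons_val_two, Matrix.tail_cons, Matrix.cons_val_three]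
          rw [show (-1-δ)*u + (-1-δ)*u + (-1+ε)*u + θ = u by linear_combination -hueq,
            max_eq_right hupos.le]
      · exact Set.eq_univ_of_forall fun i => by fin_cases i <;> simpa [support] using hupos
end
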